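/- Let p be an HV-convex polyomino. If every pair of corner cells of p (cells having two consecutive neighbors not in p) is joined by an inner 4-connected path of p changing direction at most once, then every pair of cells of p is joined by such a path, i.e., p is L-convex. -/
import Mathlib


def Adj (a b : ℤ × ℤ) : Prop := (a.1 - b.1).natAbs + (a.2 - b.2).natAbs = 1

def FourConnected (p : Set (ℤ × ℤ)) : Prop :=
  ∀ c1 ∈ p, ∀ c2 ∈ p, ∃ l : List (ℤ × ℤ),
    l.head? = some c1 ∧ l.getLast? = some c2 ∧ (∀ c ∈ l, c ∈ p) ∧ l.Chain' Adj

def HConvex (p : Set (ℤ × ℤ)) : Prop :=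
  ∀ x1 x2 x3 y : ℤ, x1 ≤ x2 → x2 ≤ x3 → (x1, y) ∈ p → (x3, y) ∈ p → (x2, y) ∈ p

def VConvex (p : Set (ℤ × ℤ)) : Prop :=
  ∀ x y1 y2 y3 : ℤ, y1 ≤ y2 → y2 ≤ y3 → (x, y1) ∈ p → (x, y3) ∈ p → (x, y2) ∈ p

def HSeg (p : Set (ℤ × ℤ)) (x1 x2 y : ℤ) : Prop :=
  ∀ x : ℤ, min x1 x2 ≤ x → x ≤ max x1 x2 → (x, y) ∈ p

def VSeg (p : Set (ℤ × ℤ)) (x y1 y2 : ℤ) : Prop :=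
  ∀ y : ℤ, min y1 y2 ≤ y → y ≤ max y1 y2 → (x, y) ∈ p

/-- An inner path from `c1` to `c2` changing direction at most once:
either a horizontal segment followed by a vertical one, or vice versa,
entirely contained in `p`. -/
def LPath (p : Set (ℤ × ℤ)) (c1 c2 : ℤ × ℤ) : Prop :=
  (HSeg p c1.1 c2.1 c1.2 ∧ VSeg p c2.1 c1.2 c2.2) ∨
  (VSeg p c1.1 c1.2 c2.2 ∧ HSeg p c1.1 c2.1 c2.2)

def LConvex (p : Set (ℤ × ℤ)) : Prop := ∀ c1 ∈ p, ∀ c2 ∈ p, LPath p c1 c2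

def NECorner (p : Set (ℤ × ℤ)) (x y : ℤ) : Prop :=
  (x, y) ∈ p ∧ (x + 1, y) ∉ p ∧ (x, y + 1) ∉ p

def NWCorner (p : Set (ℤ × ℤ)) (x y : ℤ) : Prop :=
  (x, y) ∈ p ∧ (x - 1, y) ∉ p ∧ (x, y + 1) ∉ p

def Corner (p : Set (ℤ × ℤ)) (x y : ℤ) : Prop :=
  (x, y) ∈ p ∧
    (((x, y + 1) ∉ p ∧ (x + 1, y) ∉ p) ∨ ((x + 1, y) ∉ p ∧ (x, y - 1) ∉ p) ∨
      ((x, y - 1) ∉ p ∧ (x - 1, y) ∉ p) ∨ ((x - 1, y) ∉ p ∧ (x, y + 1) ∉ p))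

lemma hseg_of {p : Set (ℤ × ℤ)} (hH : HConvex p) {x1 x2 y : ℤ}
    (h1 : (x1, y) ∈ p) (h2 : (x2, y) ∈ p) : HSeg p x1 x2 y := by
  intro x hl hr
  rcases le_total x1 x2 with h | h
  · exact hH x1 x x2 y (by simpa [min_eq_left h] using hl)
      (by simpa [max_eq_right h] using hr) h1 h2
  · exact hH x2 x x1 y (by simpa [min_eq_right h] using hl)
      (by simpa [max_eq_left h] using hr) h2 h1

lemma vseg_of {p : Set (ℤ × ℤ)} (hV : VConvex p) {x y1 y2 : ℤ}
    (h1 : (x, y1) ∈ p) (h2 : (x, y2) ∈ p) : VSeg p x y1 y2 := by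
  intro y hl hr
  rcases le_total y1 y2 with h | h
  · exact hV x y1 y y2 (by simpa [min_eq_left h] using hl)
      (by simpa [max_eq_right h] using hr) h1 h2
  · exact hV x y2 y y1 (by simpa [min_eq_right h] using hl)
      (by simpa [max_eq_left h] using hr) h2 h1

lemma lpath_of_mem {p : Set (ℤ × ℤ)} (hH : HConvex p) (hV : VConvex p)
    {x1 y1 x2 y2 : ℤ} (h1 : (x1, y1) ∈ p) (h2 : (x2, y2) ∈ p)
    (h : (x2, y1) ∈ p ∨ (x1, y2) ∈ p) : LPath p (x1, y1) (x2, y2) := by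
  rcases h with h | h
  · exact Or.inl ⟨hseg_of hH h1 h, vseg_of hV h h2⟩
  · exact Or.inr ⟨vseg_of hV h1 h, hseg_of hH h h2⟩

lemma mem_of_lpath {p : Set (ℤ × ℤ)} {x1 y1 x2 y2 : ℤ}
    (h : LPath p (x1, y1) (x2, y2)) : (x2, y1) ∈ p ∨ (x1, y2) ∈ p := by
  rcases h with ⟨hs, _⟩ | ⟨hs, _⟩
  · exact Or.inl (hs x2 (min_le_right _ _) (le_max_right _ _))
  · exact Or.inr (hs y2 (min_le_right _ _) (le_max_right _ _))

lemma exists_corner_gen {p : Set (ℤ × ℤ)} (hfin : p.Finite) {x y : ℤ} (ε δ : ℤ)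
    (hε : ε * ε = 1) (hδ : δ * δ = 1) (hxy : (x, y) ∈ p) :
    ∃ a b : ℤ, (a, b) ∈ p ∧ ε * a ≤ ε * x ∧ δ * b ≤ δ * y ∧
      (a - ε, b) ∉ p ∧ (a, b - δ) ∉ p := by
  set S : Set (ℤ × ℤ) := {q | q ∈ p ∧ ε * q.1 ≤ ε * x ∧ δ * q.2 ≤ δ * y} with hS
  have hSfin : S.Finite := hfin.subset fun q hq => hq.1
  have hSne : S.Nonempty := ⟨(x, y), hxy, le_refl _, le_refl _⟩
  obtain ⟨q, hqS, hmin⟩ := Set.exists_min_image S (fun q => ε * q.1 + δ * q.2) hSfin hSne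
  refine ⟨q.1, q.2, hqS.1, hqS.2.1, hqS.2.2, ?_, ?_⟩
  · intro hmem
    have h1 : ((q.1 - ε, q.2) : ℤ × ℤ) ∈ S :=
      ⟨hmem, by simp only; nlinarith [hqS.2.1], hqS.2.2⟩
    have := hmin _ h1
    simp only at this
    nlinarith
  · intro hmem
    have h1 : ((q.1, q.2 - δ) : ℤ × ℤ) ∈ S :=
      ⟨hmem, hqS.2.1, by simp only; nlinarith [hqS.2.2]⟩
    have := hmin _ h1
    simp only at this
    nlinarith

lemma main_mem {p : Set (ℤ × ℤ)} (hfin : p.Finite) (hH : HConvex p) (hV : VConvex p)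
    (hcorners : ∀ x1 y1 x2 y2 : ℤ, Corner p x1 y1 → Corner p x2 y2 →
      LPath p (x1, y1) (x2, y2))
    {x1 y1 x2 y2 : ℤ} (h1 : (x1, y1) ∈ p) (h2 : (x2, y2) ∈ p) (hx : x1 ≤ x2) :
    (x2, y1) ∈ p ∨ (x1, y2) ∈ p := by
  rcases le_total y1 y2 with hy | hy
  · -- SW corner below-left of c1, NE corner above-right of c2
    obtain ⟨a, b, hab, ha, hb, hW, hSo⟩ :=
      exists_corner_gen hfin 1 1 (by ring) (by ring) h1
    obtain ⟨a', b', hab', ha', hb', hE, hN⟩ :=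
      exists_corner_gen hfin (-1) (-1) (by ring) (by ring) h2
    have ha : a ≤ x1 := by linarith
    have hb : b ≤ y1 := by linarith
    have ha' : x2 ≤ a' := by linarith
    have hb' : y2 ≤ b' := by linarith
    have hE' : (a' + 1, b') ∉ p := by simpa [sub_neg_eq_add] using hE
    have hN' : (a', b' + 1) ∉ p := by simpa [sub_neg_eq_add] using hN
    have hc1 : Corner p a b := ⟨hab, Or.inr (Or.inr (Or.inl ⟨hSo, hW⟩))⟩
    have hc2 : Corner p a' b' := ⟨hab', Or.inl ⟨hN', hE'⟩⟩
    rcases mem_of_lpath (hcorners a b a' b' hc1 hc2) with h | h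
    · left
      have hxb : (x2, b) ∈ p := hH a x2 a' b (by linarith) ha' hab h
      exact hV x2 b y1 y2 hb hy hxb h2
    · right
      have hay : (a, y2) ∈ p := hV a b y2 b' (by linarith) hb' hab h
      exact hH a x1 x2 y2 ha hx hay h2
  · -- NW corner above-left of c1, SE corner below-right of c2
    obtain ⟨a, b, hab, ha, hb, hW, hN⟩ :=
      exists_corner_gen hfin 1 (-1) (by ring) (by ring) h1
    obtain ⟨a', b', hab', ha', hb', hE, hSo⟩ :=
      exists_corner_gen hfin (-1) 1 (by ring) (by ring) h2
    have ha : a ≤ x1 := by linarith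
    have hb : y1 ≤ b := by linarith
    have ha' : x2 ≤ a' := by linarith
    have hb' : b' ≤ y2 := by linarith
    have hN' : (a, b + 1) ∉ p := by simpa [sub_neg_eq_add] using hN
    have hE' : (a' + 1, b') ∉ p := by simpa [sub_neg_eq_add] using hE
    have hc1 : Corner p a b := ⟨hab, Or.inr (Or.inr (Or.inr ⟨hW, hN'⟩))⟩
    have hc2 : Corner p a' b' := ⟨hab', Or.inr (Or.inl ⟨hE', hSo⟩)⟩
    rcases mem_of_lpath (hcorners a b a' b' hc1 hc2) with h | h
    · left
      have hxb : (x2, b) ∈ p := hH a x2 a' b (by linarith) ha' hab h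
      exact hV x2 y2 y1 b hy hb h2 hxb
    · right
      have hay : (a, y2) ∈ p := hV a b' y2 b hb' (by linarith) h hab
      exact hH a x1 x2 y2 ha hx hay h2

/-- if every pair of corners of an HV-convex polyomino is joined by an inner
path changing direction at most once, then the polyomino is L-convex. -/
theorem corners_suffice (p : Set (ℤ × ℤ)) (hfin : p.Finite) (hne : p.Nonempty)
    (hconn : FourConnected p) (hH : HConvex p) (hV : VConvex p)
    (hcorners : ∀ x1 y1 x2 y2 : ℤ, Corner p x1 y1 → Corner p x2 y2 →
      LPath p (x1, y1) (x2, y2)) :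
    LConvex p := by
  rintro ⟨x1, y1⟩ h1 ⟨x2, y2⟩ h2
  refine lpath_of_mem hH hV h1 h2 ?_
  rcases le_total x1 x2 with hx | hx
  · exact main_mem hfin hH hV hcorners h1 h2 hx
  · exact (main_mem hfin hH hV hcorners h2 h1 hx).symm
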